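/- Let μ be a probability measure on ℝ with finite first moment and let τ ∈ (0,1). Define the quantile regression loss L(θ) = ∫_ℝ ρ_τ(z − θ) dμ(z), where ρ_τ(u) = u·(τ − 1_{u<0}). Then θ* = F_μ⁻¹(τ) is a minimizer of L over θ ∈ ℝ. -/

import Mathlib

open MeasureTheory Set

/-- The CDF of a measure on ℝ: `F(y) = μ((-∞, y])`. -/
noncomputable def cdfFn (μ : Measure ℝ) (y : ℝ) : ℝ := (μ (Iic y)).toReal

/-- The quantile function (generalized inverse CDF): `F⁻¹(ω) = inf {y | ω ≤ F(y)}`. -/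
noncomputable def quantileFn (μ : Measure ℝ) (ω : ℝ) : ℝ := sInf {y : ℝ | ω ≤ cdfFn μ y}

/-- The quantile regression check function `ρ_τ(u) = u (τ - 1_{u < 0})`. -/
noncomputable def checkFn (τ u : ℝ) : ℝ := u * (τ - if u < 0 then 1 else 0)

/-!
`ρ_τ` is convex, and `τ - c` with `c ∈ [0, 1]`, `c = 1` for `u < 0` and `c = 0` for `u > 0`,
is a subgradient of it at `u`. Integrating the subgradient inequality at `u = z - q`, where
`q = F_μ⁻¹(τ)`, with `c = 1_{z ≤ q}` resp. `c = 1_{z < q}` gives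
`L(θ) ≥ L(q) + (q - θ) (τ - F_μ(q))` resp. `L(θ) ≥ L(q) + (q - θ) (τ - μ(-∞, q))`.
Since `μ(-∞, q) ≤ τ ≤ F_μ(q)`, the correction term is nonnegative in the first case when `q ≤ θ`
and in the second when `θ ≤ q`.
-/

open ProbabilityTheory

section Quantile

variable (μ : Measure ℝ) {τ : ℝ}

lemma cdfFn_eq_cdf [IsProbabilityMeasure μ] : cdfFn μ = cdf μ :=
  funext fun y => (cdf_eq_real μ y).symm

lemma nonempty_setOf_le_cdf (hτ : τ < 1) : {y | τ ≤ cdf μ y}.Nonempty :=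
  ((tendsto_cdf_atTop μ).eventually (eventually_ge_nhds hτ)).exists

lemma bddBelow_setOf_le_cdf (hτ : 0 < τ) : BddBelow {y | τ ≤ cdf μ y} := by
  obtain ⟨y₀, hy₀⟩ := ((tendsto_cdf_atBot μ).eventually (eventually_lt_nhds hτ)).exists
  refine ⟨y₀, fun y (hy : τ ≤ cdf μ y) => le_of_not_gt fun hlt => ?_⟩
  exact (hy.trans (monotone_cdf μ hlt.le)).not_gt hy₀

lemma measureReal_Iio_le_of_forall_cdf_le [IsProbabilityMeasure μ] {q : ℝ} (hτ : 0 ≤ τ)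
    (h : ∀ t < q, cdf μ t ≤ τ) : μ.real (Iio q) ≤ τ := by
  have hIio : μ (Iio q) = ENNReal.ofReal (Function.leftLim (cdf μ) q) := by
    conv_lhs => rw [← measure_cdf μ]
    rw [(cdf μ).measure_Iio (tendsto_cdf_atBot μ), sub_zero]
  rw [measureReal_def, hIio, ENNReal.toReal_ofReal', (monotone_cdf μ).leftLim_eq_sSup]
  refine max_le (csSup_le (nonempty_Iio.image _) ?_) hτ
  rintro _ ⟨t, ht, rfl⟩
  exact h t ht

variable [IsProbabilityMeasure μ]

lemma quantileFn_eq_sInf : quantileFn μ τ = sInf {y | τ ≤ cdf μ y} := by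
  rw [quantileFn, cdfFn_eq_cdf]

lemma le_cdf_quantileFn (hτ : τ < 1) : τ ≤ cdf μ (quantileFn μ τ) := by
  rw [← (cdf μ).iInf_Ioi_eq]
  refine le_ciInf fun ⟨y, (hy : quantileFn μ τ < y)⟩ => ?_
  rw [quantileFn_eq_sInf] at hy
  obtain ⟨x, hx, hxy⟩ := exists_lt_of_csInf_lt (nonempty_setOf_le_cdf μ hτ) hy
  exact hx.trans (monotone_cdf μ hxy.le)

lemma cdf_lt_of_lt_quantileFn (hτ : 0 < τ) {t : ℝ} (ht : t < quantileFn μ τ) :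
    cdf μ t < τ := by
  rw [quantileFn_eq_sInf] at ht
  exact lt_of_not_ge fun h => ht.not_ge (csInf_le (bddBelow_setOf_le_cdf μ hτ) h)

end Quantile

section CheckFunction

lemma checkFn_eq_mul_add_max (τ u : ℝ) : checkFn τ u = τ * u + max (-u) 0 := by
  unfold checkFn
  split_ifs with h
  · rw [max_eq_left (by linarith)]; ring
  · rw [max_eq_right (by linarith)]; ring

lemma checkFn_add_mul_le {τ u c : ℝ} (hc₀ : 0 ≤ c) (hc₁ : c ≤ 1) (hneg : u < 0 → c = 1)
    (hpos : 0 < u → c = 0) (v : ℝ) : checkFn τ u + (v - u) * (τ - c) ≤ checkFn τ v := by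
  rw [checkFn_eq_mul_add_max, checkFn_eq_mul_add_max]
  rcases lt_trichotomy u 0 with hu | rfl | hu
  · rw [hneg hu, max_eq_left (by linarith)]
    linarith [le_max_left (-v) 0]
  · rw [neg_zero, max_self]
    nlinarith [mul_le_mul_of_nonneg_right (le_max_left (-v) 0) hc₀,
      mul_le_mul_of_nonneg_left hc₁ (le_max_right (-v) 0)]
  · rw [hpos hu, max_eq_right (by linarith)]
    linarith [le_max_right (-v) 0]

variable (μ : Measure ℝ)

lemma integrable_checkFn_sub [IsFiniteMeasure μ] (hint : Integrable (fun x : ℝ => x) μ)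
    (τ θ : ℝ) : Integrable (fun z => checkFn τ (z - θ)) μ := by
  simp_rw [checkFn_eq_mul_add_max, neg_sub]
  exact ((hint.sub (integrable_const θ)).const_mul τ).add
    ((integrable_const θ).sub hint).pos_part

lemma integral_checkFn_sub_add_mul_le [IsProbabilityMeasure μ]
    (hint : Integrable (fun x : ℝ => x) μ) {τ q : ℝ} {s : Set ℝ} (hs : MeasurableSet s)
    (hIio : Iio q ⊆ s) (hIic : s ⊆ Iic q) (θ : ℝ) :
    ∫ z, checkFn τ (z - q) ∂μ + (q - θ) * (τ - μ.real s) ≤ ∫ z, checkFn τ (z - θ) ∂μ := by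
  have hind : Integrable (s.indicator (1 : ℝ → ℝ)) μ := (integrable_const 1).indicator hs
  have hslope : Integrable (fun z => (q - θ) * (τ - s.indicator 1 z)) μ :=
    ((integrable_const τ).sub hind).const_mul _
  have hpoint (z : ℝ) : checkFn τ (z - q) + (q - θ) * (τ - s.indicator 1 z) ≤
      checkFn τ (z - θ) := by
    have := checkFn_add_mul_le (τ := τ) (u := z - q) (c := s.indicator 1 z)
      (indicator_nonneg (fun _ _ => zero_le_one) z)
      (indicator_le_self' (fun _ _ => zero_le_one) z)
      (fun h => indicator_of_mem (hIio (sub_neg.1 h)) 1)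
      (fun h => indicator_of_notMem (fun hz => (sub_pos.1 h).not_ge (hIic hz)) 1) (z - θ)
    rwa [sub_sub_sub_cancel_left] at this
  calc ∫ z, checkFn τ (z - q) ∂μ + (q - θ) * (τ - μ.real s)
      = ∫ z, checkFn τ (z - q) + (q - θ) * (τ - s.indicator 1 z) ∂μ := by
        rw [integral_add (integrable_checkFn_sub μ hint τ q) hslope, integral_const_mul,
          integral_sub (integrable_const τ) hind, integral_const, integral_indicator_one hs,
          probReal_univ, one_smul]
    _ ≤ ∫ z, checkFn τ (z - θ) ∂μ :=
        integral_mono ((integrable_checkFn_sub μ hint τ q).add hslope)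
          (integrable_checkFn_sub μ hint τ θ) hpoint

end CheckFunction

/-- `F_μ⁻¹(τ)` minimizes the quantile regression loss
`L(θ) = ∫ ρ_τ(z - θ) dμ(z)` over `θ ∈ ℝ`. -/
theorem quantile_minimizes_quantile_regression_loss
    (μ : Measure ℝ) [IsProbabilityMeasure μ] (hint : Integrable (fun x : ℝ => x) μ)
    (τ : ℝ) (hτ : τ ∈ Set.Ioo (0 : ℝ) 1) :
    ∀ θ : ℝ,
      (∫ z, checkFn τ (z - quantileFn μ τ) ∂μ) ≤ ∫ z, checkFn τ (z - θ) ∂μ := by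
  intro θ
  set q := quantileFn μ τ
  rcases le_total q θ with hqθ | hθq
  · have hF : τ ≤ μ.real (Iic q) := cdf_eq_real μ q ▸ le_cdf_quantileFn μ hτ.2
    have hloss := integral_checkFn_sub_add_mul_le μ hint (τ := τ) (q := q) measurableSet_Iic
      Iio_subset_Iic_self subset_rfl θ
    nlinarith [mul_nonneg (sub_nonneg.2 hqθ) (sub_nonneg.2 hF)]
  · have hF : μ.real (Iio q) ≤ τ := measureReal_Iio_le_of_forall_cdf_le μ hτ.1.le
      fun t ht => (cdf_lt_of_lt_quantileFn μ hτ.1 ht).le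
    have hloss := integral_checkFn_sub_add_mul_le μ hint (τ := τ) (q := q) measurableSet_Iio
      subset_rfl Iio_subset_Iic_self θ
    nlinarith [mul_nonneg (sub_nonneg.2 hθq) (sub_nonneg.2 hF)]
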